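/- arXiv:2012.12972 — 3 statements merged into one kernel-verified Lean document; each statement's English description precedes it below -/
import Mathlib

section
/- Let d ≥ 3 and let G be a d-regular graph with a vertex v whose connected component has more than 2(d+1) vertices; write V_i for the set of vertices at graph distance exactly i from v. Suppose 1 ≤ |V_2| ≤ d−1, |V_3| ≥ 2, every two distinct vertices of V_2 are adjacent in G, V_4 = ∅, and some u ∈ V_2 has at least two neighbours in V_1. Then a single Δ⁺-switch transforms G into a graph G' such that N_{G'}(v) = N_G(v), the set of edges of G' joining two vertices of V_1 equals the set of edges of G joining two vertices of V_1, the number of neighbours of u in V_1 in G' is one less than in G, and the set of vertices at graph distance exactly 2 from v in G' equals V_2 together with exactly one vertex of V_3. -/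
open SimpleGraph

/-- A Δ⁺-switch: five distinct vertices `v w x y z` with `vx, vw, xy, wz` edges
and `xw, yz` non-edges; the edges `xy, wz` are deleted and `xw, yz` are added. -/
def DeltaPlusSwitch {V : Type*} (G G' : SimpleGraph V) : Prop :=
  ∃ v w x y z : V, List.Pairwise (· ≠ ·) [v, w, x, y, z] ∧
    G.Adj v x ∧ G.Adj v w ∧ G.Adj x y ∧ G.Adj w z ∧ ¬ G.Adj x w ∧ ¬ G.Adj y z ∧
    G'.edgeSet = (G.edgeSet \ {s(x, y), s(w, z)}) ∪ {s(x, w), s(y, z)}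

/-- A Δ⁻-switch: five distinct vertices `v w x y z` with `vx, vw, xw, yz` edges
and `xy, wz` non-edges; the edges `xw, yz` are deleted and `xy, wz` are added. -/
def DeltaMinusSwitch {V : Type*} (G G' : SimpleGraph V) : Prop :=
  ∃ v w x y z : V, List.Pairwise (· ≠ ·) [v, w, x, y, z] ∧
    G.Adj v x ∧ G.Adj v w ∧ G.Adj x w ∧ G.Adj y z ∧ ¬ G.Adj x y ∧ ¬ G.Adj w z ∧
    G'.edgeSet = (G.edgeSet \ {s(x, w), s(y, z)}) ∪ {s(x, y), s(w, z)}

/-- A Δ-switch is a Δ⁺-switch or a Δ⁻-switch. -/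
def DeltaSwitch {V : Type*} (G G' : SimpleGraph V) : Prop :=
  DeltaPlusSwitch G G' ∨ DeltaMinusSwitch G G'

/-- Two graphs are Δ-switch equivalent if one is obtained from the other by a
finite (possibly empty) sequence of Δ-switches. -/
def DeltaEquiv {V : Type*} (G G' : SimpleGraph V) : Prop :=
  Relation.ReflTransGen DeltaSwitch G G'

/-- A graph is `d`-regular: every vertex has exactly `d` neighbours. -/
def RegularDeg {V : Type*} (G : SimpleGraph V) (d : ℕ) : Prop :=
  ∀ x : V, (G.neighborSet x).ncard = d

private lemma dist_le_succ_of_adj' {V : Type*} {G : SimpleGraph V} {v y x : V}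
    (hr : G.Reachable v y) (h : G.Adj y x) : G.dist v x ≤ G.dist v y + 1 := by
  obtain ⟨p, hp⟩ := hr.exists_walk_length_eq_dist
  calc G.dist v x ≤ (p.concat h).length := SimpleGraph.dist_le _
    _ = G.dist v y + 1 := by rw [SimpleGraph.Walk.length_concat, hp]

private lemma exists_adj_dist' {V : Type*} {G : SimpleGraph V} {v x : V} {n : ℕ}
    (h : G.dist v x = n + 1) : ∃ y, G.dist v y = n ∧ G.Adj y x := by
  have hne : G.dist x v ≠ 0 := by rw [SimpleGraph.dist_comm]; omega
  obtain ⟨p, hp⟩ := SimpleGraph.exists_walk_of_dist_ne_zero hne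
  rw [SimpleGraph.dist_comm, h] at hp
  cases p with
  | nil => simp at hp
  | @cons _ y _ hadj q =>
    have hq : q.length = n := by simpa using hp
    have hy1 : G.dist v y ≤ n := by
      have := SimpleGraph.dist_le q.reverse
      rwa [SimpleGraph.Walk.length_reverse, hq] at this
    have hreach : G.Reachable v y := ⟨q.reverse⟩
    have hy2 := dist_le_succ_of_adj' hreach hadj.symm
    exact ⟨y, by omega, hadj.symm⟩

private lemma dist_eq_two_iff' {V : Type*} (G : SimpleGraph V) (v x : V) :
    G.dist v x = 2 ↔ (x ≠ v ∧ ¬ G.Adj v x ∧ ∃ y, G.Adj v y ∧ G.Adj y x) := by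
  constructor
  · intro h
    obtain ⟨y, hy, hyx⟩ := exists_adj_dist' (n := 1) h
    refine ⟨?_, ?_, y, SimpleGraph.dist_eq_one_iff_adj.mp hy, hyx⟩
    · rintro rfl; rw [SimpleGraph.dist_self] at h; omega
    · intro hadj
      have := SimpleGraph.dist_eq_one_iff_adj.mpr hadj
      omega
  · rintro ⟨hxv, hnadj, y, h1, h2⟩
    let hw : G.Walk v x := SimpleGraph.Walk.cons h1 (SimpleGraph.Walk.cons h2 SimpleGraph.Walk.nil)
    have hwl : hw.length = 2 := rfl
    have hle : G.dist v x ≤ 2 := hwl ▸ SimpleGraph.dist_le hw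
    have h0 : G.dist v x ≠ 0 := by
      intro h0
      rw [SimpleGraph.dist_eq_zero_iff_eq_or_not_reachable] at h0
      rcases h0 with h0 | h0
      · exact hxv h0.symm
      · exact h0 ⟨hw⟩
    have h1' : G.dist v x ≠ 1 := fun e => hnadj (SimpleGraph.dist_eq_one_iff_adj.mp e)
    omega

/-- Lemma 12 (L1): with `G₂` complete, `1 ≤ |V₂| ≤ d-1`, `|V₃| ≥ 2`, `V₄ = ∅`,
component of `v` larger than `2(d+1)`, and `u ∈ V₂` having at least two
neighbours in `V₁`: a single Δ⁺-switch reduces the in-degree of `u` by one and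
moves one vertex of `V₃` into `V₂`, without altering the edges inside `V₁`. -/
theorem reduce_indegree_and_grow_V2 {V : Type*} [Fintype V] {d : ℕ} (hd : 3 ≤ d)
    (G : SimpleGraph V) (hreg : RegularDeg G d) (v : V)
    (hC : 2 * (d + 1) < {x : V | G.Reachable v x}.ncard)
    (hV2lo : 1 ≤ {x : V | G.dist v x = 2}.ncard)
    (hV2hi : {x : V | G.dist v x = 2}.ncard ≤ d - 1)
    (hV3 : 2 ≤ {x : V | G.dist v x = 3}.ncard)
    (hcomplete : ∀ p q : V, G.dist v p = 2 → G.dist v q = 2 → p ≠ q → G.Adj p q)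
    (hV4 : {x : V | G.dist v x = 4} = ∅)
    (u : V) (hu : G.dist v u = 2)
    (hindeg : 2 ≤ {w : V | w ∈ G.neighborSet v ∧ G.Adj u w}.ncard) :
    ∃ G' : SimpleGraph V, DeltaPlusSwitch G G' ∧
      G'.neighborSet v = G.neighborSet v ∧
      (∀ a ∈ G.neighborSet v, ∀ b ∈ G.neighborSet v, (G'.Adj a b ↔ G.Adj a b)) ∧
      {w : V | w ∈ G.neighborSet v ∧ G'.Adj u w}.ncard + 1 =
        {w : V | w ∈ G.neighborSet v ∧ G.Adj u w}.ncard ∧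
      (∃ t : V, G.dist v t = 3 ∧
        {x : V | G'.dist v x = 2} = insert t {x : V | G.dist v x = 2}) := by
  classical
  have hvv : G.dist v v = 0 := SimpleGraph.dist_self
  have haux2 : ∀ {p q : V} {m n : ℕ}, G.dist v p = m → G.dist v q = n → m ≠ n → p ≠ q :=
    fun h1 h2 hmn e => hmn (by rw [← h1, ← h2, e])
  have hru : G.Reachable v u := Reachable.of_dist_ne_zero (by omega)
  have hno4 : ∀ x : V, G.dist v x ≠ 4 := by
    intro x hx
    have hmem : x ∈ {x : V | G.dist v x = 4} := hx
    rw [hV4] at hmem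
    exact hmem
  have h4aux : ∀ n : ℕ, ∀ x : V, G.dist v x = 4 + n → False := by
    intro n
    induction n with
    | zero => intro x hx; exact hno4 x hx
    | succ n ih =>
      intro x hx
      obtain ⟨y, hy, -⟩ := exists_adj_dist' (show G.dist v x = (4 + n) + 1 by omega)
      exact ih y hy
  have hdist3 : ∀ x : V, G.Reachable v x → G.dist v x ≤ 3 := by
    intro x hr
    by_contra h
    exact h4aux (G.dist v x - 4) x (by omega)
  have hD1 : {x : V | G.dist v x = 1} = G.neighborSet v := by
    ext y
    simp [Set.mem_setOf_eq, SimpleGraph.mem_neighborSet, ← SimpleGraph.dist_eq_one_iff_adj]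
  -- pick two in-neighbours of u
  obtain ⟨a, a', ha, ha', haa'⟩ := (Set.one_lt_ncard_iff (Set.toFinite _)).mp hindeg
  have hvaadj : G.Adj v a := ha.1
  have hvaadj' : G.Adj v a' := ha'.1
  have hua : G.Adj u a := ha.2
  have hua' : G.Adj u a' := ha'.2
  have ha1 : G.dist v a = 1 := SimpleGraph.dist_eq_one_iff_adj.mpr hvaadj
  have ha'1 : G.dist v a' = 1 := SimpleGraph.dist_eq_one_iff_adj.mpr hvaadj'
  -- classify neighbours of u
  have hNusub : ∀ y ∈ G.neighborSet u, G.dist v y = 1 ∨ G.dist v y = 2 ∨ G.dist v y = 3 := by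
    intro y hy
    have hadj : G.Adj u y := hy
    have h1 := dist_le_succ_of_adj' hru hadj
    have h2 := dist_le_succ_of_adj' (hru.trans hadj.reachable) hadj.symm
    omega
  have hABC : G.neighborSet u =
      (G.neighborSet u ∩ {x : V | G.dist v x = 1}) ∪
      (G.neighborSet u ∩ {x : V | G.dist v x = 2}) ∪
      (G.neighborSet u ∩ {x : V | G.dist v x = 3}) := by
    ext y
    simp only [Set.mem_union, Set.mem_inter_iff, Set.mem_setOf_eq]
    constructor
    · intro hy
      rcases hNusub y hy with h | h | h <;> tauto
    · tauto
  have hdisAB : Disjoint (G.neighborSet u ∩ {x : V | G.dist v x = 1})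
      (G.neighborSet u ∩ {x : V | G.dist v x = 2}) := by
    rw [Set.disjoint_left]
    rintro x ⟨-, h1⟩ ⟨-, h2⟩
    simp only [Set.mem_setOf_eq] at h1 h2
    omega
  have hdisABC : Disjoint ((G.neighborSet u ∩ {x : V | G.dist v x = 1}) ∪
      (G.neighborSet u ∩ {x : V | G.dist v x = 2}))
      (G.neighborSet u ∩ {x : V | G.dist v x = 3}) := by
    rw [Set.disjoint_left]
    rintro x (⟨-, h1⟩ | ⟨-, h1⟩) ⟨-, h2⟩ <;>
      simp only [Set.mem_setOf_eq] at h1 h2 <;> omega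
  have hsum : (G.neighborSet u ∩ {x : V | G.dist v x = 1}).ncard +
      (G.neighborSet u ∩ {x : V | G.dist v x = 2}).ncard +
      (G.neighborSet u ∩ {x : V | G.dist v x = 3}).ncard = d := by
    have e1 := Set.ncard_union_eq hdisAB (Set.toFinite _) (Set.toFinite _)
    have e2 := Set.ncard_union_eq hdisABC (Set.toFinite _) (Set.toFinite _)
    have e3 := hreg u
    rw [hABC, e2, e1] at e3
    omega
  have hAS : G.neighborSet u ∩ {x : V | G.dist v x = 1} =
      {w : V | w ∈ G.neighborSet v ∧ G.Adj u w} := by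
    ext w
    simp only [Set.mem_inter_iff, Set.mem_setOf_eq, SimpleGraph.mem_neighborSet,
      SimpleGraph.dist_eq_one_iff_adj]
    tauto
  have hAcard : 2 ≤ (G.neighborSet u ∩ {x : V | G.dist v x = 1}).ncard := by
    rw [hAS]; exact hindeg
  have hB : G.neighborSet u ∩ {x : V | G.dist v x = 2} = {x : V | G.dist v x = 2} \ {u} := by
    ext q
    simp only [Set.mem_inter_iff, Set.mem_setOf_eq, Set.mem_diff, Set.mem_singleton_iff,
      SimpleGraph.mem_neighborSet]
    constructor
    · rintro ⟨hadj, h2⟩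
      exact ⟨h2, fun e => G.loopless.irrefl u (e ▸ hadj)⟩
    · rintro ⟨h2, hne⟩
      exact ⟨hcomplete u q hu h2 (fun e => hne e.symm), h2⟩
  have hBcard : (G.neighborSet u ∩ {x : V | G.dist v x = 2}).ncard + 1 =
      {x : V | G.dist v x = 2}.ncard := by
    rw [hB]
    exact Set.ncard_diff_singleton_add_one (show u ∈ {x : V | G.dist v x = 2} from hu)
      (Set.toFinite _)
  -- component bound
  have hcompsub : {x : V | G.Reachable v x} ⊆ {v} ∪ {x : V | G.dist v x = 1} ∪
      {x : V | G.dist v x = 2} ∪ {x : V | G.dist v x = 3} := by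
    intro x hx
    have hx' : G.Reachable v x := hx
    have h3 := hdist3 x hx'
    have h0 : G.dist v x = 0 → x = v := fun h => ((hx'.dist_eq_zero_iff).mp h).symm
    simp only [Set.mem_union, Set.mem_singleton_iff, Set.mem_setOf_eq]
    have hcases : G.dist v x = 0 ∨ G.dist v x = 1 ∨ G.dist v x = 2 ∨ G.dist v x = 3 := by omega
    tauto
  have hcompcard : {x : V | G.Reachable v x}.ncard ≤ 1 + d + {x : V | G.dist v x = 2}.ncard +
      {x : V | G.dist v x = 3}.ncard := by
    have h1 := Set.ncard_le_ncard hcompsub (Set.toFinite _)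
    have h2 := Set.ncard_union_le ({v} ∪ {x : V | G.dist v x = 1} ∪ {x : V | G.dist v x = 2})
      {x : V | G.dist v x = 3}
    have h3 := Set.ncard_union_le ({v} ∪ {x : V | G.dist v x = 1}) {x : V | G.dist v x = 2}
    have h4 := Set.ncard_union_le ({v} : Set V) {x : V | G.dist v x = 1}
    have h5 : ({v} : Set V).ncard = 1 := Set.ncard_singleton v
    have h6 : {x : V | G.dist v x = 1}.ncard = d := by rw [hD1]; exact hreg v
    omega
  -- find w₀ ∈ V₃ not adjacent to u
  obtain ⟨w₀, hw3, hnuw⟩ : ∃ w₀, G.dist v w₀ = 3 ∧ ¬ G.Adj u w₀ := by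
    by_contra h
    push_neg at h
    have hsub : {x : V | G.dist v x = 3} ⊆ G.neighborSet u ∩ {x : V | G.dist v x = 3} :=
      fun x hx => ⟨h x hx, hx⟩
    have := Set.ncard_le_ncard hsub (Set.toFinite _)
    omega
  -- find t ∈ V₃ adjacent to w₀
  have hw0r : G.Reachable v w₀ := Reachable.of_dist_ne_zero (by omega)
  have hNw : ∀ y ∈ G.neighborSet w₀, G.dist v y = 2 ∨ G.dist v y = 3 := by
    intro y hy
    have hadj : G.Adj w₀ y := hy
    have h1 := dist_le_succ_of_adj' hw0r hadj
    have h2 := dist_le_succ_of_adj' (hw0r.trans hadj.reachable) hadj.symm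
    have h4 := hno4 y
    omega
  obtain ⟨t, htw, ht3⟩ : ∃ t ∈ G.neighborSet w₀, G.dist v t = 3 := by
    by_contra h
    push_neg at h
    have hsub : G.neighborSet w₀ ⊆ {x : V | G.dist v x = 2} := by
      intro y hy
      rcases hNw y hy with h2 | h3
      · exact h2
      · exact absurd h3 (h y hy)
    have := Set.ncard_le_ncard hsub (Set.toFinite _)
    rw [hreg w₀] at this
    omega
  have htwadj : G.Adj w₀ t := htw
  -- find c
  obtain ⟨c, hc2, hcw⟩ := exists_adj_dist' (show G.dist v w₀ = 2 + 1 by omega)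
  have hcu_ne : c ≠ u := fun e => hnuw (e ▸ hcw)
  have hcu : G.Adj c u := hcomplete c u hc2 hu hcu_ne
  have hnat : ¬ G.Adj a t := by
    intro h
    have hra : G.Reachable v a := hvaadj.reachable
    have := dist_le_succ_of_adj' hra h
    omega
  -- inequality facts
  have hvu : v ≠ u := haux2 hvv hu (by omega)
  have hva : v ≠ a := haux2 hvv ha1 (by omega)
  have hva' : v ≠ a' := haux2 hvv ha'1 (by omega)
  have hvw : v ≠ w₀ := haux2 hvv hw3 (by omega)
  have hvt : v ≠ t := haux2 hvv ht3 (by omega)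
  have hvc : v ≠ c := haux2 hvv hc2 (by omega)
  have hau : a ≠ u := haux2 ha1 hu (by omega)
  have ha'u : a' ≠ u := haux2 ha'1 hu (by omega)
  have haw : a ≠ w₀ := haux2 ha1 hw3 (by omega)
  have ha'w : a' ≠ w₀ := haux2 ha'1 hw3 (by omega)
  have hat : a ≠ t := haux2 ha1 ht3 (by omega)
  have ha't : a' ≠ t := haux2 ha'1 ht3 (by omega)
  have huw : u ≠ w₀ := haux2 hu hw3 (by omega)
  have hut : u ≠ t := haux2 hu ht3 (by omega)
  have hca : c ≠ a := haux2 hc2 ha1 (by omega)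
  have hcw₀ : c ≠ w₀ := haux2 hc2 hw3 (by omega)
  have hct : c ≠ t := haux2 hc2 ht3 (by omega)
  have hwt : w₀ ≠ t := htwadj.ne
  -- the switched graph
  set G' : SimpleGraph V :=
    SimpleGraph.fromEdgeSet ((G.edgeSet \ {s(u, a), s(w₀, t)}) ∪ {s(u, w₀), s(a, t)})
    with hG'def
  have hE : G'.edgeSet = (G.edgeSet \ {s(u, a), s(w₀, t)}) ∪ {s(u, w₀), s(a, t)} := by
    rw [hG'def, SimpleGraph.edgeSet_fromEdgeSet]
    ext e
    simp only [Set.mem_diff, Set.mem_setOf_eq]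
    constructor
    · exact fun h => h.1
    · intro he
      refine ⟨he, ?_⟩
      rcases he with ⟨he, -⟩ | he
      · exact G.not_isDiag_of_mem_edgeSet he
      · rcases he with he | he <;> rw [he, Sym2.mem_diagSet, Sym2.mk_isDiag_iff]
        · exact huw
        · exact hat
  have hadj' : ∀ p q : V, G'.Adj p q ↔
      (G.Adj p q ∧ ¬(s(p, q) = s(u, a) ∨ s(p, q) = s(w₀, t))) ∨
      (s(p, q) = s(u, w₀) ∨ s(p, q) = s(a, t)) := by
    intro p q
    rw [← SimpleGraph.mem_edgeSet, hE]
    simp only [Set.mem_union, Set.mem_diff, SimpleGraph.mem_edgeSet, Set.mem_insert_iff,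
      Set.mem_singleton_iff]
  -- (i) edges at v unchanged
  have hAdjv : ∀ q : V, G'.Adj v q ↔ G.Adj v q := by
    intro q
    rw [hadj' v q]
    simp only [Sym2.eq_iff]
    constructor
    · rintro (⟨h, -⟩ | h)
      · exact h
      · rcases h with (⟨h1, -⟩ | ⟨h1, -⟩) | (⟨h1, -⟩ | ⟨h1, -⟩)
        · exact absurd h1 hvu
        · exact absurd h1 hvw
        · exact absurd h1 hva
        · exact absurd h1 hvt
    · intro h
      left
      refine ⟨h, ?_⟩
      rintro ((⟨h1, -⟩ | ⟨h1, -⟩) | (⟨h1, -⟩ | ⟨h1, -⟩))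
      · exact hvu h1
      · exact hva h1
      · exact hvw h1
      · exact hvt h1
  -- membership as distance facts, helper to refute Sym2 equalities
  have hd2 : ∀ {p q : V} {e f : V}, s(p, q) = s(e, f) →
      (p = e ∧ q = f) ∨ (p = f ∧ q = e) := fun h => Sym2.eq_iff.mp h
  -- (ii) edges inside V₁ unchanged
  have hAdj1 : ∀ p ∈ G.neighborSet v, ∀ q ∈ G.neighborSet v, (G'.Adj p q ↔ G.Adj p q) := by
    intro p hp q hq
    have hp1 : G.dist v p = 1 := SimpleGraph.dist_eq_one_iff_adj.mpr hp
    have hq1 : G.dist v q = 1 := SimpleGraph.dist_eq_one_iff_adj.mpr hq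
    rw [hadj' p q]
    constructor
    · rintro (⟨h, -⟩ | (h | h))
      · exact h
      · rcases hd2 h with ⟨h1, -⟩ | ⟨h1, -⟩ <;> rw [h1] at hp1 <;> omega
      · rcases hd2 h with ⟨h1, h2⟩ | ⟨h1, -⟩
        · rw [h2] at hq1; omega
        · rw [h1] at hp1; omega
    · intro h
      left
      refine ⟨h, ?_⟩
      rintro (h1 | h1) <;> rcases hd2 h1 with ⟨e1, e2⟩ | ⟨e1, e2⟩
      · rw [e1] at hp1; omega
      · rw [e2] at hq1; omega
      · rw [e1] at hp1; omega
      · rw [e1] at hp1; omega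
  -- (iii) in-neighbourhood of u
  have hS : {w : V | w ∈ G.neighborSet v ∧ G'.Adj u w} =
      {w : V | w ∈ G.neighborSet v ∧ G.Adj u w} \ {a} := by
    ext w
    simp only [Set.mem_setOf_eq, Set.mem_diff, Set.mem_singleton_iff]
    constructor
    · rintro ⟨hw, hw'⟩
      have hw1 : G.dist v w = 1 := SimpleGraph.dist_eq_one_iff_adj.mpr hw
      rw [hadj' u w] at hw'
      rcases hw' with ⟨hadj, hne⟩ | (h | h)
      · refine ⟨⟨hw, hadj⟩, fun e => hne (Or.inl ?_)⟩
        rw [e]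
      · rcases hd2 h with ⟨-, h2⟩ | ⟨h1, -⟩
        · rw [h2] at hw1; omega
        · rw [h1] at hu; omega
      · rcases hd2 h with ⟨h1, -⟩ | ⟨h1, -⟩ <;> rw [h1] at hu <;> omega
    · rintro ⟨⟨hw, hadj⟩, hne⟩
      have hw1 : G.dist v w = 1 := SimpleGraph.dist_eq_one_iff_adj.mpr hw
      refine ⟨hw, ?_⟩
      rw [hadj' u w]
      left
      refine ⟨hadj, ?_⟩
      rintro (h1 | h1) <;> rcases hd2 h1 with ⟨e1, e2⟩ | ⟨e1, e2⟩
      · exact hne e2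
      · rw [e1] at hu; omega
      · rw [e1] at hu; omega
      · rw [e1] at hu; omega
  have hcard3 : {w : V | w ∈ G.neighborSet v ∧ G'.Adj u w}.ncard + 1 =
      {w : V | w ∈ G.neighborSet v ∧ G.Adj u w}.ncard := by
    rw [hS]
    exact Set.ncard_diff_singleton_add_one ha (Set.toFinite _)
  -- (iv) distance-two set
  have hset : {x : V | G'.dist v x = 2} = insert t {x : V | G.dist v x = 2} := by
    ext x
    simp only [Set.mem_setOf_eq, Set.mem_insert_iff]
    rw [dist_eq_two_iff' G' v x]
    constructor
    · rintro ⟨hxv, hnadj, y, hvy, hyx⟩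
      have hvyG : G.Adj v y := (hAdjv y).mp hvy
      have hy1 : G.dist v y = 1 := SimpleGraph.dist_eq_one_iff_adj.mpr hvyG
      have hnadjG : ¬ G.Adj v x := fun h => hnadj ((hAdjv x).mpr h)
      rw [hadj' y x] at hyx
      rcases hyx with ⟨hadj, -⟩ | (h | h)
      · right
        have hle := dist_le_succ_of_adj' hvyG.reachable hadj
        have h0 : G.dist v x ≠ 0 := by
          intro h0
          rw [SimpleGraph.dist_eq_zero_iff_eq_or_not_reachable] at h0
          rcases h0 with h0 | h0
          · exact hxv h0.symm
          · exact h0 (hvyG.reachable.trans hadj.reachable)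
        have h1 : G.dist v x ≠ 1 := fun e => hnadjG (SimpleGraph.dist_eq_one_iff_adj.mp e)
        omega
      · rcases hd2 h with ⟨h1, -⟩ | ⟨h1, -⟩ <;> rw [h1] at hy1 <;> omega
      · rcases hd2 h with ⟨-, h2⟩ | ⟨h1, -⟩
        · exact Or.inl h2
        · rw [h1] at hy1; omega
    · rintro (rfl | hx2)
      · refine ⟨fun e => hvt e.symm, ?_, a, (hAdjv a).mpr hvaadj, ?_⟩
        · intro h
          have := SimpleGraph.dist_eq_one_iff_adj.mpr ((hAdjv x).mp h)
          omega
        · rw [hadj' a x]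
          right
          right
          rfl
      · have hxv : x ≠ v := fun e => by rw [e, hvv] at hx2; omega
        have hnadjG : ¬ G.Adj v x := fun h => by
          have := SimpleGraph.dist_eq_one_iff_adj.mpr h
          omega
        refine ⟨hxv, fun h => hnadjG ((hAdjv x).mp h), ?_⟩
        by_cases hxu : x = u
        · refine ⟨a', (hAdjv a').mpr hvaadj', ?_⟩
          rw [hadj' a' x]
          left
          refine ⟨by rw [hxu]; exact hua'.symm, ?_⟩
          rintro (h1 | h1) <;> rcases hd2 h1 with ⟨e1, e2⟩ | ⟨e1, e2⟩
          · rw [e1] at ha'1; omega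
          · exact haa' e1.symm
          · rw [e1] at ha'1; omega
          · rw [e1] at ha'1; omega
        · obtain ⟨y, hy1, hyx⟩ := exists_adj_dist' (show G.dist v x = 1 + 1 from hx2)
          refine ⟨y, (hAdjv y).mpr (SimpleGraph.dist_eq_one_iff_adj.mp hy1), ?_⟩
          rw [hadj' y x]
          left
          refine ⟨hyx, ?_⟩
          rintro (h1 | h1) <;> rcases hd2 h1 with ⟨e1, e2⟩ | ⟨e1, e2⟩
          · rw [e1] at hy1; omega
          · exact hxu e2
          · rw [e1] at hy1; omega
          · rw [e1] at hy1; omega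
  -- assemble
  refine ⟨G', ⟨c, w₀, u, a, t, ?_, hcu, hcw, hua, htwadj, hnuw, hnat, hE⟩,
    Set.ext fun q => ?_, hAdj1, hcard3, t, ht3, hset⟩
  · refine List.Pairwise.cons ?_ (List.Pairwise.cons ?_ (List.Pairwise.cons ?_
      (List.Pairwise.cons ?_ (List.pairwise_singleton _ _))))
    · intro b hb
      fin_cases hb
      exacts [hcw₀, hcu_ne, hca, hct]
    · intro b hb
      fin_cases hb
      exacts [huw.symm, haw.symm, hwt]
    · intro b hb
      fin_cases hb
      exacts [hau.symm, hut]
    · intro b hb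
      fin_cases hb
      exacts [hat]
  · simp only [SimpleGraph.mem_neighborSet]
    exact hAdjv q
end

section
/- Let d ≥ 3 and let G be a d-regular graph with a vertex v; write V_i for the set of vertices at graph distance exactly i from v. Suppose every two distinct vertices of V_2 are adjacent in G, 2 ≤ |V_2| ≤ d−1, every vertex of V_2 has exactly one neighbour in V_1, V_3 ≠ ∅, and V_4 ≠ ∅. Then a single Δ⁺-switch transforms G into a graph G' such that N_{G'}(v) = N_G(v), the set of edges of G' joining two vertices of V_1 equals the set of edges of G joining two vertices of V_1, and there exist two distinct vertices at graph distance exactly 2 from v in G' that are non-adjacent in G'. -/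
open SimpleGraph

private lemma sym2_ne_of_left {V : Type*} {a b c d : V} (h1 : a ≠ c) (h2 : a ≠ d) :
    s(a, b) ≠ s(c, d) := by
  intro h
  rcases Sym2.eq_iff.mp h with ⟨h', _⟩ | ⟨h', _⟩
  · exact h1 h'
  · exact h2 h'

private lemma dist_le_dist_add_one' {V : Type*} {G : SimpleGraph V} {v a b : V}
    (hr : G.Reachable v b) (hab : G.Adj b a) : G.dist v a ≤ G.dist v b + 1 := by
  obtain ⟨p, hp⟩ := hr.exists_walk_length_eq_dist
  calc G.dist v a ≤ (p.concat hab).length := G.dist_le _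
  _ = G.dist v b + 1 := by rw [SimpleGraph.Walk.length_concat, hp]

private lemma exists_adj_dist_pred' {V : Type*} {G : SimpleGraph V} {v x : V} {n : ℕ}
    (h : G.dist v x = n + 1) : ∃ y, G.Adj x y ∧ G.dist v y = n := by
  have hr : G.Reachable v x := Reachable.of_dist_ne_zero (by omega)
  obtain ⟨p, hp⟩ := hr.exists_walk_length_eq_dist
  have hEx : ∃ q : G.Walk x v, q.length = n + 1 :=
    ⟨p.reverse, by rw [SimpleGraph.Walk.length_reverse, hp, h]⟩
  obtain ⟨q, hq⟩ := hEx
  cases q with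
  | nil => simp at hq
  | @cons _ y _ hadj q' =>
    refine ⟨y, hadj, ?_⟩
    have hq' : q'.length = n := by simpa using hq
    have h1 : G.dist v y ≤ n := by
      have := G.dist_le q'.reverse
      rwa [SimpleGraph.Walk.length_reverse, hq'] at this
    have h2 : G.dist v x ≤ G.dist v y + 1 :=
      dist_le_dist_add_one' ⟨q'.reverse⟩ hadj.symm
    omega


/-- Lemma 13 (L2): with `G₂` complete, `2 ≤ |V₂| ≤ d-1`, every vertex of `V₂`
having exactly one neighbour in `V₁`, `V₃ ≠ ∅` and `V₄ ≠ ∅`: a single Δ⁺-switch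
creates a non-adjacent pair at distance `2` from `v`, without altering the edges
inside `V₁`. -/
theorem create_non_edge_in_V2_when_V4_nonempty {V : Type*} [Fintype V] {d : ℕ}
    (hd : 3 ≤ d) (G : SimpleGraph V) (hreg : RegularDeg G d) (v : V)
    (hcomplete : ∀ p q : V, G.dist v p = 2 → G.dist v q = 2 → p ≠ q → G.Adj p q)
    (hV2lo : 2 ≤ {x : V | G.dist v x = 2}.ncard)
    (hV2hi : {x : V | G.dist v x = 2}.ncard ≤ d - 1)
    (hindeg : ∀ u : V, G.dist v u = 2 →
      {w : V | w ∈ G.neighborSet v ∧ G.Adj u w}.ncard = 1)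
    (hV3 : {x : V | G.dist v x = 3}.Nonempty)
    (hV4 : {x : V | G.dist v x = 4}.Nonempty) :
    ∃ G' : SimpleGraph V, DeltaPlusSwitch G G' ∧
      G'.neighborSet v = G.neighborSet v ∧
      (∀ a ∈ G.neighborSet v, ∀ b ∈ G.neighborSet v, (G'.Adj a b ↔ G.Adj a b)) ∧
      (∃ a b : V, a ≠ b ∧ G'.dist v a = 2 ∧ G'.dist v b = 2 ∧ ¬ G'.Adj a b) := by
    classical
  obtain ⟨w, hw4⟩ := hV4
  simp only [Set.mem_setOf_eq] at hw4
  obtain ⟨c, hwc, hc3⟩ := exists_adj_dist_pred' (show G.dist v w = 3 + 1 by omega)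
  obtain ⟨p, hcp, hp2⟩ := exists_adj_dist_pred' (show G.dist v c = 2 + 1 by omega)
  obtain ⟨q, hq2, hqp⟩ :=
    Set.exists_ne_of_one_lt_ncard (s := {x : V | G.dist v x = 2}) (by omega) p
  simp only [Set.mem_setOf_eq] at hq2
  have hpq : G.Adj p q := hcomplete p q hp2 hq2 (Ne.symm hqp)
  obtain ⟨p₁, hpp₁, hp₁1⟩ := exists_adj_dist_pred' (show G.dist v p = 1 + 1 by omega)
  obtain ⟨q₁, hqq₁, hq₁1⟩ := exists_adj_dist_pred' (show G.dist v q = 1 + 1 by omega)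
  have hv0 : G.dist v v = 0 := G.dist_self
  have hd1 : ∀ a : V, G.Adj v a → G.dist v a = 1 := fun a h => SimpleGraph.dist_eq_one_iff_adj.mpr h
  have hnexy : ∀ ⦃a b : V⦄, G.dist v a ≠ G.dist v b → a ≠ b := by
    rintro a b h rfl; exact h rfl
  -- any neighbour of w has distance at least 3 from v
  have hWnb : ∀ t : V, G.Adj w t → 3 ≤ G.dist v t := by
    intro t ht
    have hrw : G.Reachable v w := Reachable.of_dist_ne_zero (by omega)
    have hrt : G.Reachable v t := hrw.trans ht.reachable
    have := dist_le_dist_add_one' hrt ht.symm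
    omega
  have hpw : ¬ G.Adj p w := fun h => by have := hWnb p h.symm; omega
  -- choose z
  have hq₁p : q₁ ≠ p := hnexy (by omega)
  have hzEx : ((G.neighborSet w) \ ({c} ∪ G.neighborSet q)).Nonempty := by
    rw [Set.nonempty_iff_ne_empty]
    intro hemp
    rw [Set.diff_eq_empty] at hemp
    have hsub2 : G.neighborSet w ⊆ {c} ∪ (G.neighborSet q \ {q₁, p}) := by
      intro t ht
      rcases hemp ht with h | h
      · exact Or.inl h
      · refine Or.inr ⟨h, ?_⟩
        simp only [Set.mem_insert_iff, Set.mem_singleton_iff]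
        push_neg
        have h3 := hWnb t ht
        constructor
        · intro h; rw [h] at h3; omega
        · intro h; rw [h] at h3; omega
    have hcard1 : ({q₁, p} : Set V) ⊆ G.neighborSet q := by
      rintro t (rfl | rfl)
      · exact hqq₁
      · exact hpq.symm
    have hc2 : (G.neighborSet q \ {q₁, p}).ncard = d - 2 := by
      rw [Set.ncard_diff hcard1 (Set.toFinite _), hreg q, Set.ncard_pair hq₁p]
    have hle := Set.ncard_le_ncard hsub2 (Set.toFinite _)
    have hle2 := Set.ncard_union_le ({c} : Set V) (G.neighborSet q \ {q₁, p})
    rw [hreg w] at hle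
    rw [hc2, Set.ncard_singleton] at hle2
    omega
  obtain ⟨z, hwz', hznc⟩ := hzEx
  have hwz : G.Adj w z := hwz'
  simp only [Set.mem_union, Set.mem_singleton_iff, SimpleGraph.mem_neighborSet,
    not_or] at hznc
  obtain ⟨hzc, hqz⟩ := hznc
  have hz3 : 3 ≤ G.dist v z := hWnb z hwz
  -- inequalities between the five special vertices and v, p₁, q₁
  have hvp : v ≠ p := hnexy (by omega)
  have hvq : v ≠ q := hnexy (by omega)
  have hvw : v ≠ w := hnexy (by omega)
  have hvz : v ≠ z := hnexy (by omega)
  have hcw' : c ≠ w := hnexy (by omega)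
  have hcp' : c ≠ p := hnexy (by omega)
  have hcq : c ≠ q := hnexy (by omega)
  have hwp : w ≠ p := hnexy (by omega)
  have hwq : w ≠ q := hnexy (by omega)
  have hpz : p ≠ z := hnexy (by omega)
  have hqz' : q ≠ z := hnexy (by omega)
  have hpq' : p ≠ q := Ne.symm hqp
  -- the switched graph
  set Ep : Set (Sym2 V) :=
    (G.edgeSet \ {s(p, q), s(w, z)}) ∪ {s(p, w), s(q, z)} with hEpdef
  set G' : SimpleGraph V := SimpleGraph.fromEdgeSet Ep with hG'def
  have hG'edge : G'.edgeSet = Ep := by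
    rw [hG'def, edgeSet_fromEdgeSet]
    ext e
    simp only [Set.mem_diff, Set.mem_setOf_eq, and_iff_left_iff_imp]
    intro he hdiag
    rcases he with ⟨hG, -⟩ | he2
    · exact G.not_isDiag_of_mem_edgeSet hG hdiag
    · simp only [Set.mem_insert_iff, Set.mem_singleton_iff] at he2
      rcases he2 with rfl | rfl
      · exact hwp (Sym2.mk_isDiag_iff.mp hdiag).symm
      · exact hqz' (Sym2.mk_isDiag_iff.mp hdiag)
  have hkey : ∀ a b : V, a ≠ p → a ≠ q → a ≠ w → a ≠ z → (G'.Adj a b ↔ G.Adj a b) := by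
    intro a b h1 h2 h3 h4
    rw [hG'def, fromEdgeSet_adj]
    constructor
    · rintro ⟨he, hab⟩
      rcases he with ⟨hG, -⟩ | he2
      · exact hG
      · rcases he2 with h | h
        · exact absurd h (sym2_ne_of_left h1 h3)
        · exact absurd h (sym2_ne_of_left h2 h4)
    · intro hG
      refine ⟨Or.inl ⟨hG, ?_⟩, hG.ne⟩
      simp only [Set.mem_insert_iff, Set.mem_singleton_iff]
      push_neg
      exact ⟨sym2_ne_of_left h1 h2, sym2_ne_of_left h3 h4⟩
  -- conclusion 1
  have hNb : G'.neighborSet v = G.neighborSet v := by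
    ext a
    rw [SimpleGraph.mem_neighborSet, SimpleGraph.mem_neighborSet]
    exact hkey v a hvp hvq hvw hvz
  -- non-adjacency of p and q in G'
  have hnadj : ¬ G'.Adj p q := by
    rw [hG'def, fromEdgeSet_adj]
    rintro ⟨he, -⟩
    rcases he with ⟨-, hne⟩ | he2
    · exact hne (Or.inl rfl)
    · rcases he2 with h | h
      · rcases Sym2.eq_iff.mp h with ⟨-, h'⟩ | ⟨h', -⟩
        · exact hwq h'.symm
        · exact hwp h'.symm
      · exact sym2_ne_of_left hpq' hpz h
  -- distance computation in G'
  have hdist2 : ∀ a a₁ : V, G.dist v a = 2 → G.Adj v a₁ → G.Adj a₁ a → G'.dist v a = 2 := by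
    intro a a₁ ha2 h1 h2
    have ha₁1 : G.dist v a₁ = 1 := hd1 a₁ h1
    have h1' : G'.Adj v a₁ := (hkey v a₁ hvp hvq hvw hvz).mpr h1
    have h2' : G'.Adj a₁ a :=
      (hkey a₁ a (hnexy (by omega)) (hnexy (by omega)) (hnexy (by omega))
        (hnexy (by omega))).mpr h2
    have hle : G'.dist v a ≤ 2 := by
      have := G'.dist_le (SimpleGraph.Walk.cons h1' (SimpleGraph.Walk.cons h2' SimpleGraph.Walk.nil))
      simpa using this
    have hva : v ≠ a := hnexy (by omega)
    have hne0 : G'.dist v a ≠ 0 := by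
      rw [SimpleGraph.dist_ne_zero_iff_ne_and_reachable]
      exact ⟨hva, ⟨SimpleGraph.Walk.cons h1' (SimpleGraph.Walk.cons h2' SimpleGraph.Walk.nil)⟩⟩
    have hne1 : G'.dist v a ≠ 1 := by
      intro h
      have hadj : G'.Adj v a := SimpleGraph.dist_eq_one_iff_adj.mp h
      have := hd1 a ((hkey v a hvp hvq hvw hvz).mp hadj)
      omega
    omega
  refine ⟨G', ⟨c, w, p, q, z, ?_, hcp, hwc.symm, hpq, hwz, hpw, hqz, hG'edge⟩, hNb, ?_, p, q,
    hpq', hdist2 p p₁ hp2 ((SimpleGraph.dist_eq_one_iff_adj).mp hp₁1) hpp₁.symm,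
    hdist2 q q₁ hq2 ((SimpleGraph.dist_eq_one_iff_adj).mp hq₁1) hqq₁.symm, hnadj⟩
  · -- pairwise distinct
    refine List.Pairwise.cons ?_ (List.Pairwise.cons ?_ (List.Pairwise.cons ?_
      (List.pairwise_cons.mpr ⟨?_, List.pairwise_singleton _ _⟩)))
    · intro a ha
      simp only [List.mem_cons, List.mem_singleton, List.not_mem_nil, or_false] at ha
      rcases ha with rfl | rfl | rfl | rfl
      exacts [hcw', hcp', hcq, Ne.symm hzc]
    · intro a ha
      simp only [List.mem_cons, List.mem_singleton, List.not_mem_nil, or_false] at ha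
      rcases ha with rfl | rfl | rfl
      exacts [hwp, hwq, hwz.ne]
    · intro a ha
      simp only [List.mem_cons, List.mem_singleton, List.not_mem_nil, or_false] at ha
      rcases ha with rfl | rfl
      exacts [hpq', hpz]
    · intro a ha
      simp only [List.mem_singleton] at ha
      subst ha; exact hqz'
  · -- edges inside V₁ unchanged
    intro a ha b hb
    rw [SimpleGraph.mem_neighborSet] at ha
    have ha1 : G.dist v a = 1 := hd1 a ha
    exact hkey a b (hnexy (by omega)) (hnexy (by omega)) (hnexy (by omega)) (hnexy (by omega))
end

section
/- Let G be a d-regular graph on a vertex set V, and let C ⊆ V with |C| = k ≥ 6 be such that the subgraph of G induced by C is a cycle of length k. Let σ be any permutation of V that fixes every vertex outside C, and let G_σ be the graph on V whose edge set consists of all edges of G having at least one endpoint outside C, together with the edges {σ(u), σ(w)} for each edge {u, w} of G with both endpoints in C. Then G and G_σ are Δ-switch equivalent. -/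
open SimpleGraph

set_option maxHeartbeats 1000000

open Fin.CommRing

lemma pairwise5 {V : Type*} {v w x y z : V}
    (h1 : v≠w)(h2:v≠x)(h3:v≠y)(h4:v≠z)(h5:w≠x)(h6:w≠y)(h7:w≠z)(h8:x≠y)(h9:x≠z)(h10:y≠z) :
    List.Pairwise (· ≠ ·) [v,w,x,y,z] := by
  simp only [List.pairwise_cons, List.mem_cons, List.not_mem_nil]; aesop

lemma swap_step {V : Type*} (K K' : SimpleGraph V) (a b c d e : V)
    (hab : a ≠ b) (hac : a ≠ c) (had : a ≠ d) (hae : a ≠ e)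
    (hbc : b ≠ c) (hbd : b ≠ d) (hbe : b ≠ e)
    (hcd : c ≠ d) (hce : c ≠ e) (hde : d ≠ e)
    (e1 : K.Adj a b) (e2 : K.Adj b c) (e3 : K.Adj c d) (e4 : K.Adj d e)
    (n1 : ¬ K.Adj b d) (n2 : ¬ K.Adj c e) (n3 : ¬ K.Adj a e)
    (hK' : K'.edgeSet = (K.edgeSet \ {s(b,c), s(d,e)}) ∪ {s(b,d), s(c,e)}) :
    DeltaEquiv K K' := by
  have hba := hab.symm; have hca := hac.symm; have hda := had.symm; have hea := hae.symm
  have hcb := hbc.symm; have hdb := hbd.symm; have heb := hbe.symm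
  have hdc := hcd.symm; have hec := hce.symm; have hed := hde.symm
  set S1 : Set (Sym2 V) := (K.edgeSet \ {s(b,a), s(d,e)}) ∪ {s(b,d), s(a,e)} with hS1
  set K1 : SimpleGraph V := fromEdgeSet S1 with hK1def
  have hK1 : K1.edgeSet = S1 := by
    rw [hK1def, edgeSet_fromEdgeSet]
    ext q
    simp only [Set.mem_diff, Set.mem_setOf_eq, and_iff_left_iff_imp]
    intro hq hdiag
    rw [hS1] at hq
    rcases hq with ⟨hq, _⟩ | hq
    · exact K.not_isDiag_of_mem_edgeSet hq hdiag
    · rcases hq with rfl | rfl <;> simp [Sym2.mk_isDiag_iff, hbd, hae] at hdiag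
  have adj1 : ∀ u v : V, K1.Adj u v ↔ s(u,v) ∈ S1 := fun u v => by
    rw [← mem_edgeSet, hK1]
  have step1 : DeltaPlusSwitch K K1 := by
    refine ⟨c, d, b, a, e, pairwise5 hcd hcb hca hce hdb hda hde hba hbe hae,
      e2.symm, e3, e1.symm, e4, n1, n3, ?_⟩
    rw [hK1, hS1]
  have mKba : s(b,a) ∈ K.edgeSet := (K.mem_edgeSet).2 e1.symm
  have mKbc : s(b,c) ∈ K.edgeSet := (K.mem_edgeSet).2 e2
  have nKbd : s(b,d) ∉ K.edgeSet := fun h => n1 ((K.mem_edgeSet).1 h)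
  have nKce : s(c,e) ∉ K.edgeSet := fun h => n2 ((K.mem_edgeSet).1 h)
  have nKae : s(a,e) ∉ K.edgeSet := fun h => n3 ((K.mem_edgeSet).1 h)
  have A_dc : K1.Adj d c := by
    rw [adj1, hS1]; left
    refine ⟨(K.mem_edgeSet).2 e3.symm, ?_⟩
    simp [Sym2.eq_iff, hdb, hde, hda, hdc, hce, hcb, hca, hea, heb, hec]
  have A_db : K1.Adj d b := by
    rw [adj1, hS1]; right; simp [Sym2.eq_iff]
  have A_cb : K1.Adj c b := by
    rw [adj1, hS1]; left
    refine ⟨(K.mem_edgeSet).2 e2.symm, ?_⟩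
    simp [Sym2.eq_iff, hcb, hca, hcd, hce, hba, hbd, hbe]
  have A_ea : K1.Adj e a := by
    rw [adj1, hS1]; right; simp [Sym2.eq_iff]
  have N_ce : ¬ K1.Adj c e := by
    rw [adj1, hS1]
    rintro (⟨hq, _⟩ | hq)
    · exact nKce hq
    · simp [Sym2.eq_iff, hcb, hcd, hca, hce, hea, heb, hed, hec] at hq
  have N_ba : ¬ K1.Adj b a := by
    rw [adj1, hS1]
    rintro (⟨_, hq⟩ | hq)
    · exact hq (by simp)
    · simp [Sym2.eq_iff, hba, hbd, hbe, hab, hac, had, hae] at hq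
  have o1 : s(c,b) = s(b,c) := Sym2.eq_swap
  have o2 : s(e,a) = s(a,e) := Sym2.eq_swap
  -- key set identity
  have key : ((((K.edgeSet \ {s(b,a), s(d,e)}) ∪ {s(b,d), s(a,e)}) \ {s(b,c), s(a,e)}) ∪ {s(c,e), s(b,a)})
      = (K.edgeSet \ {s(b,c), s(d,e)}) ∪ {s(b,d), s(c,e)} := by
    have d1 : s(b,a) ≠ s(b,c) := by simp [Sym2.eq_iff, hac, hab, hbc, hba]
    have d2 : s(b,a) ≠ s(d,e) := by simp [Sym2.eq_iff, hbd, hbe, hda, hea, hae, had]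
    have d3 : s(b,d) ≠ s(b,c) := by simp [Sym2.eq_iff, hdc, hbc, hdb, hbd]
    have d4 : s(b,d) ≠ s(a,e) := by simp [Sym2.eq_iff, hba, hab, hbe, hda, hde, had]
    ext q
    simp only [Set.mem_union, Set.mem_diff, Set.mem_insert_iff, Set.mem_singleton_iff]
    constructor
    · rintro (⟨(⟨hqK, hq2⟩ | (rfl | rfl)), hq3⟩ | (rfl | rfl))
      · push_neg at hq2 hq3
        exact Or.inl ⟨hqK, by tauto⟩
      · exact Or.inr (Or.inl rfl)
      · exact absurd (Or.inr rfl) hq3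
      · exact Or.inr (Or.inr rfl)
      · refine Or.inl ⟨mKba, ?_⟩
        rintro (h | h); exact d1 h; exact d2 h
    · rintro (⟨hqK, hq2⟩ | (rfl | rfl))
      · push_neg at hq2
        by_cases hq1 : q = s(b,a)
        · exact Or.inr (Or.inr hq1)
        · refine Or.inl ⟨Or.inl ⟨hqK, ?_⟩, ?_⟩
          · rintro (h | h); exact hq1 h; exact hq2.2 h
          · rintro (h | h); exact hq2.1 h; exact nKae (h ▸ hqK)
      · refine Or.inl ⟨Or.inr (Or.inl rfl), ?_⟩
        rintro (h | h); exact d3 h; exact d4 h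
      · exact Or.inr (Or.inl rfl)
  have step2 : DeltaMinusSwitch K1 K' := by
    refine ⟨d, b, c, e, a, pairwise5 hdb hdc hde hda hbc hbe hba hce hca hea,
      A_dc, A_db, A_cb, A_ea, N_ce, N_ba, ?_⟩
    rw [hK', hK1, hS1, o1, o2]
    exact key.symm
  exact Relation.ReflTransGen.head (Or.inl step1) (Relation.ReflTransGen.single (Or.inr step2))


variable {m : ℕ}


lemma finAddVal (u : Fin (m+6)) (i : ℕ) (h : i < m + 6) :
    (u + (i : Fin (m+6))).val = u.val + i ∨ (u + (i : Fin (m+6))).val + (m+6) = u.val + i := by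
  have hv : ((i : Fin (m+6)) : ℕ) = i := by rw [Fin.val_natCast]; exact Nat.mod_eq_of_lt h
  rw [Fin.add_def, hv]
  simp only [Fin.val_mk]
  rcases Nat.lt_or_ge (u.val + i) (m+6) with hc | hc
  · left; exact Nat.mod_eq_of_lt hc
  · right
    have : (u.val + i) % (m+6) = u.val + i - (m+6) := by
      rw [Nat.mod_eq_sub_mod hc, Nat.mod_eq_of_lt (by omega)]
    omega

lemma finAddOneVal (u : Fin (m+6)) :
    (u + 1).val = u.val + 1 ∨ (u + 1).val + (m+6) = u.val + 1 := by
  simpa using finAddVal u 1 (by omega)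

lemma finCastVal (i : ℕ) (h : i < m + 6) : ((i : Fin (m+6)) : ℕ) = i := by
  rw [Fin.val_natCast]; exact Nat.mod_eq_of_lt h

lemma cycAdj_iff (u v : Fin (m+6)) :
    (cycleGraph (m+6)).Adj u v ↔ (u = v + 1 ∨ v = u + 1) := by
  rw [cycleGraph_adj']
  have h1 : ((1 : Fin (m+6)) : ℕ) = 1 := by simp [Fin.val_one']
  constructor
  · rintro (h|h)
    · left; have h2 : u - v = 1 := Fin.ext (by rw [h, h1])
      rw [sub_eq_iff_eq_add] at h2; rw [h2]; ring
    · right; have h2 : v - u = 1 := Fin.ext (by rw [h, h1])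
      rw [sub_eq_iff_eq_add] at h2; rw [h2]; ring
  · rintro (rfl|rfl)
    · left; have h2 : v + 1 - v = 1 := by ring
      rw [h2, h1]
    · right; have h2 : u + 1 - u = 1 := by ring
      rw [h2, h1]

lemma eq_add_one_iff (w u : Fin (m+6)) :
    w = u + 1 ↔ (w.val = u.val + 1 ∨ (u.val + 1 = m + 6 ∧ w.val = 0)) := by
  rw [Fin.ext_iff]
  have h := finAddOneVal u
  have h1 := w.isLt; have h2 := u.isLt; have h3 := (u+1 : Fin (m+6)).isLt
  generalize hq : ((u+1 : Fin (m+6))).val = q at h h3 ⊢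
  omega

lemma eq_cast_iff (w : Fin (m+6)) (i : ℕ) (h : i < m + 6) :
    w = (i : Fin (m+6)) ↔ w.val = i := by
  rw [Fin.ext_iff, finCastVal i h]

lemma cycAdj_translate (u v d : Fin (m+6)) :
    (cycleGraph (m+6)).Adj (u+d) (v+d) ↔ (cycleGraph (m+6)).Adj u v := by
  rw [cycAdj_iff, cycAdj_iff]
  have h1 : (u + d = v + d + 1) ↔ (u = v + 1) := by
    constructor
    · intro h; apply add_right_cancel (b := d); rw [h]; ring
    · intro h; rw [h]; ring
  have h2 : (v + d = u + d + 1) ↔ (v = u + 1) := by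
    constructor
    · intro h; apply add_right_cancel (b := d); rw [h]; ring
    · intro h; rw [h]; ring
  rw [h1, h2]

lemma swap_translate (a b d z : Fin (m+6)) :
    Equiv.swap (a+d) (b+d) (z+d) = (Equiv.swap a b z) + d := by
  rcases eq_or_ne z a with rfl|h1
  · rw [Equiv.swap_apply_left, Equiv.swap_apply_left]
  · rcases eq_or_ne z b with rfl|h2
    · rw [Equiv.swap_apply_right, Equiv.swap_apply_right]
    · rw [Equiv.swap_apply_of_ne_of_ne (fun h => h1 (add_right_cancel h)) (fun h => h2 (add_right_cancel h)),
        Equiv.swap_apply_of_ne_of_ne h1 h2]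

lemma core0 (x y : Fin (m+6)) :
    (cycleGraph (m+6)).Adj (Equiv.swap (((2:ℕ)) : Fin (m+6)) (((3:ℕ)) : Fin (m+6)) x) (Equiv.swap (((2:ℕ)) : Fin (m+6)) (((3:ℕ)) : Fin (m+6)) y) ↔ (((cycleGraph (m+6)).Adj x y ∧ ¬(((x = (((1:ℕ)) : Fin (m+6)) ∧ y = (((2:ℕ)) : Fin (m+6))) ∨ (x = (((2:ℕ)) : Fin (m+6)) ∧ y = (((1:ℕ)) : Fin (m+6)))) ∨ ((x = (((3:ℕ)) : Fin (m+6)) ∧ y = (((4:ℕ)) : Fin (m+6))) ∨ (x = (((4:ℕ)) : Fin (m+6)) ∧ y = (((3:ℕ)) : Fin (m+6)))))) ∨ (((x = (((1:ℕ)) : Fin (m+6)) ∧ y = (((3:ℕ)) : Fin (m+6))) ∨ (x = (((3:ℕ)) : Fin (m+6)) ∧ y = (((1:ℕ)) : Fin (m+6)))) ∨ ((x = (((2:ℕ)) : Fin (m+6)) ∧ y = (((4:ℕ)) : Fin (m+6))) ∨ (x = (((4:ℕ)) : Fin (m+6)) ∧ y = (((2:ℕ)) : Fin (m+6)))))) :=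 by
  have swapfact : ∀ z : Fin (m+6), (z = ((2:ℕ) : Fin (m+6)) ∧
        Equiv.swap (((2:ℕ)) : Fin (m+6)) (((3:ℕ)) : Fin (m+6)) z = (((3:ℕ)) : Fin (m+6))) ∨
      (z = (((3:ℕ)) : Fin (m+6)) ∧
        Equiv.swap (((2:ℕ)) : Fin (m+6)) (((3:ℕ)) : Fin (m+6)) z = (((2:ℕ)) : Fin (m+6))) ∨
      ((z ≠ (((2:ℕ)) : Fin (m+6)) ∧ z ≠ (((3:ℕ)) : Fin (m+6))) ∧
        Equiv.swap (((2:ℕ)) : Fin (m+6)) (((3:ℕ)) : Fin (m+6)) z = z) := by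
    intro z
    rcases eq_or_ne z (((2:ℕ)) : Fin (m+6)) with h1 | h1
    · exact Or.inl ⟨h1, by rw [h1]; exact Equiv.swap_apply_left _ _⟩
    · rcases eq_or_ne z (((3:ℕ)) : Fin (m+6)) with h2 | h2
      · exact Or.inr (Or.inl ⟨h2, by rw [h2]; exact Equiv.swap_apply_right _ _⟩)
      · exact Or.inr (Or.inr ⟨⟨h1, h2⟩, Equiv.swap_apply_of_ne_of_ne h1 h2⟩)
  have R1 : ∀ w : Fin (m+6), w = ((1:ℕ) : Fin (m+6)) ↔ w.val = 1 := fun w => eq_cast_iff w 1 (by omega)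
  have R2 : ∀ w : Fin (m+6), w = ((2:ℕ) : Fin (m+6)) ↔ w.val = 2 := fun w => eq_cast_iff w 2 (by omega)
  have R3 : ∀ w : Fin (m+6), w = ((3:ℕ) : Fin (m+6)) ↔ w.val = 3 := fun w => eq_cast_iff w 3 (by omega)
  have R4 : ∀ w : Fin (m+6), w = ((4:ℕ) : Fin (m+6)) ↔ w.val = 4 := fun w => eq_cast_iff w 4 (by omega)
  have V1 := finCastVal (m := m) 1 (by omega)
  have V2 := finCastVal (m := m) 2 (by omega)
  have V3 := finCastVal (m := m) 3 (by omega)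
  have V4 := finCastVal (m := m) 4 (by omega)
  have hxlt := x.isLt; have hylt := y.isLt
  rcases swapfact x with ⟨hx1, hsx⟩ | ⟨hx1, hsx⟩ | ⟨hx1, hsx⟩ <;>
    rcases swapfact y with ⟨hy1, hsy⟩ | ⟨hy1, hsy⟩ | ⟨hy1, hsy⟩ <;>
    rw [hsx, hsy] <;>
    simp only [cycAdj_iff, ne_eq, eq_add_one_iff, R1, R2, R3, R4, V1, V2, V3, V4] at hx1 hy1 ⊢ <;>
    first
      | omega
      | (simp only [true_or, or_true, true_iff, iff_true, false_or, or_false,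
          false_iff, iff_false, true_and, and_true, false_and, and_false, not_or, not_and] at hx1 hy1 ⊢ ; omega)

lemma core (p x y : Fin (m+6)) :
    (cycleGraph (m+6)).Adj (Equiv.swap (p + ((2:ℕ) : Fin (m+6))) (p + ((3:ℕ) : Fin (m+6))) x) (Equiv.swap (p + ((2:ℕ) : Fin (m+6))) (p + ((3:ℕ) : Fin (m+6))) y) ↔ (((cycleGraph (m+6)).Adj x y ∧ ¬(((x = (p + ((1:ℕ) : Fin (m+6))) ∧ y = (p + ((2:ℕ) : Fin (m+6)))) ∨ (x = (p + ((2:ℕ) : Fin (m+6))) ∧ y = (p + ((1:ℕ) : Fin (m+6))))) ∨ ((x = (p + ((3:ℕ) : Fin (m+6))) ∧ y = (p + ((4:ℕ) : Fin (m+6)))) ∨ (x = (p + ((4:ℕ) : Fin (m+6))) ∧ y = (p + ((3:ℕ) : Fin (m+6))))))) ∨ (((x = (p + ((1:ℕ) : Fin (m+6))) ∧ y = (p + ((3:ℕ) : Fin (m+6)))) ∨ (x = (p + ((3:ℕ) : Fin (m+6))) ∧ y = (p + ((1:ℕ) : Fin (m+6))))) ∨ ((x = (p + ((2:ℕ) :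 Fin (m+6))) ∧ y = (p + ((4:ℕ) : Fin (m+6)))) ∨ (x = (p + ((4:ℕ) : Fin (m+6))) ∧ y = (p + ((2:ℕ) : Fin (m+6))))))) := by
  have hx : (x - p) + p = x := by ring
  have hy : (y - p) + p = y := by ring
  have hc2 : p + ((2:ℕ) : Fin (m+6)) = ((2:ℕ) : Fin (m+6)) + p := by ring
  have hc3 : p + ((3:ℕ) : Fin (m+6)) = ((3:ℕ) : Fin (m+6)) + p := by ring
  have Sx : Equiv.swap (p + ((2:ℕ) : Fin (m+6))) (p + ((3:ℕ) : Fin (m+6))) x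
      = Equiv.swap ((2:ℕ) : Fin (m+6)) ((3:ℕ) : Fin (m+6)) (x - p) + p := by
    rw [hc2, hc3]
    conv_lhs => rw [← hx]
    exact swap_translate _ _ _ _
  have Sy : Equiv.swap (p + ((2:ℕ) : Fin (m+6))) (p + ((3:ℕ) : Fin (m+6))) y
      = Equiv.swap ((2:ℕ) : Fin (m+6)) ((3:ℕ) : Fin (m+6)) (y - p) + p := by
    rw [hc2, hc3]
    conv_lhs => rw [← hy]
    exact swap_translate _ _ _ _
  have E : ∀ (w q : Fin (m+6)) (i : ℕ), (w - q = (i : Fin (m+6))) ↔ (w = q + (i : Fin (m+6))) := by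
    intro w q i
    rw [sub_eq_iff_eq_add]
    constructor <;> intro h <;> rw [h] <;> ring
  have h0 := core0 (m := m) (x - p) (y - p)
  rw [E x p 1, E x p 2, E x p 3, E x p 4, E y p 1, E y p 2, E y p 3, E y p 4] at h0
  rw [← cycAdj_translate (x - p) (y - p) p, hx, hy] at h0
  rw [Sx, Sy, cycAdj_translate]
  exact h0

section Relabel

variable {V : Type*} {m : ℕ} (G : SimpleGraph V) (C : Set V) (f : Fin (m+6) → V)

/-- The graph obtained from `G` by relabelling the internal edges of the cycle
on `C` (labelled by `f ∘ τ`). -/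
def relabel (τ : Equiv.Perm (Fin (m+6))) : SimpleGraph V where
  Adj a b := (G.Adj a b ∧ (a ∉ C ∨ b ∉ C)) ∨
    (a ≠ b ∧ ∃ i j : Fin (m+6), (cycleGraph (m+6)).Adj i j ∧ a = f (τ i) ∧ b = f (τ j))
  symm := by
    constructor
    rintro a b (⟨h, hc⟩ | ⟨hne, i, j, hadj, rfl, rfl⟩)
    · exact Or.inl ⟨h.symm, hc.symm⟩
    · exact Or.inr ⟨hne.symm, j, i, hadj.symm, rfl, rfl⟩
  loopless := by
    constructor
    rintro a (⟨h, _⟩ | ⟨hne, _⟩)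
    · exact h.ne rfl
    · exact hne rfl

lemma relabel_adj (τ : Equiv.Perm (Fin (m+6))) (a b : V) :
    (relabel G C f τ).Adj a b ↔ ((G.Adj a b ∧ (a ∉ C ∨ b ∉ C)) ∨
      (a ≠ b ∧ ∃ i j : Fin (m+6), (cycleGraph (m+6)).Adj i j ∧ a = f (τ i) ∧ b = f (τ j))) :=
  Iff.rfl

variable (hf : Function.Injective f) (hfC : ∀ i, f i ∈ C)

include hf hfC in
lemma relabel_adj_internal (τ : Equiv.Perm (Fin (m+6))) (x y : Fin (m+6)) :
    (relabel G C f τ).Adj (f (τ x)) (f (τ y)) ↔ (cycleGraph (m+6)).Adj x y := by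
  rw [relabel_adj]
  constructor
  · rintro (⟨h, hc⟩ | ⟨hne, i, j, hadj, h1, h2⟩)
    · rcases hc with hc | hc
      · exact absurd (hfC _) hc
      · exact absurd (hfC _) hc
    · have hx : x = i := τ.injective (hf h1)
      have hy : y = j := τ.injective (hf h2)
      rw [hx, hy]; exact hadj
  · intro h
    refine Or.inr ⟨?_, x, y, h, rfl, rfl⟩
    intro he
    exact h.ne (τ.injective (hf he))

include hfC in
lemma relabel_adj_cross (τ : Equiv.Perm (Fin (m+6))) {a b : V} (h : a ∉ C ∨ b ∉ C) :
    (relabel G C f τ).Adj a b ↔ G.Adj a b := by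
  rw [relabel_adj]
  constructor
  · rintro (⟨h1, _⟩ | ⟨_, i, j, hadj, rfl, rfl⟩)
    · exact h1
    · rcases h with h | h
      · exact absurd (hfC _) h
      · exact absurd (hfC _) h
  · intro h1; exact Or.inl ⟨h1, h⟩

variable (hsurj : ∀ x ∈ C, ∃ i, f i = x)
  (hGadj : ∀ i j, G.Adj (f i) (f j) ↔ (cycleGraph (m+6)).Adj i j)

include hf hfC hsurj hGadj in
lemma relabel_one : relabel G C f 1 = G := by
  ext a b
  rw [relabel_adj]
  constructor
  · rintro (⟨h, _⟩ | ⟨hne, i, j, hadj, rfl, rfl⟩)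
    · exact h
    · simp only [Equiv.Perm.one_apply]
      exact (hGadj i j).2 hadj
  · intro h
    by_cases ha : a ∈ C
    · by_cases hb : b ∈ C
      · obtain ⟨i, rfl⟩ := hsurj a ha
        obtain ⟨j, rfl⟩ := hsurj b hb
        exact Or.inr ⟨h.ne, i, j, (hGadj i j).1 h, by simp, by simp⟩
      · exact Or.inl ⟨h, Or.inr hb⟩
    · exact Or.inl ⟨h, Or.inl ha⟩

include hf hfC hsurj in
lemma relabel_step (τ : Equiv.Perm (Fin (m+6))) (p : Fin (m+6)) :
    DeltaEquiv (relabel G C f τ)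
      (relabel G C f (τ * Equiv.swap (p + ((2:ℕ) : Fin (m+6))) (p + ((3:ℕ) : Fin (m+6))))) := by
  have hfi : ∀ z w : Fin (m+6), f (τ z) = f (τ w) ↔ z = w :=
    fun z w => ⟨fun h => τ.injective (hf h), fun h => by rw [h]⟩
  have pne : ∀ i j : ℕ, i < m+6 → j < m+6 → i ≠ j →
      p + (i : Fin (m+6)) ≠ p + (j : Fin (m+6)) := by
    intro i j hi hj hij h
    have h2 : (i : Fin (m+6)) = (j : Fin (m+6)) := add_left_cancel h
    have h3 := congrArg Fin.val h2
    rw [finCastVal i hi, finCastVal j hj] at h3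
    exact hij h3
  have fne : ∀ i j : ℕ, i < m+6 → j < m+6 → i ≠ j →
      f (τ (p + (i : Fin (m+6)))) ≠ f (τ (p + (j : Fin (m+6)))) := by
    intro i j hi hj hij h
    exact pne i j hi hj hij ((hfi _ _).1 h)
  have cadd : ∀ i : ℕ, p + ((i:ℕ) : Fin (m+6)) + 1 = p + (((i+1):ℕ) : Fin (m+6)) := by
    intro i; push_cast; ring
  have cyc_succ : ∀ i : ℕ, (cycleGraph (m+6)).Adj (p + ((i:ℕ) : Fin (m+6)))
      (p + (((i+1):ℕ) : Fin (m+6))) := by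
    intro i
    rw [cycAdj_iff]
    right
    rw [cadd i]
  have cyc_non : ∀ i j : ℕ, i + 1 < m+6 → j + 1 < m + 6 → i ≠ j + 1 → j ≠ i + 1 →
      ¬ (cycleGraph (m+6)).Adj (p + ((i:ℕ) : Fin (m+6))) (p + ((j:ℕ) : Fin (m+6))) := by
    intro i j hi hj hij hji
    rw [cycAdj_iff]
    rintro (h | h)
    · rw [cadd j] at h
      exact pne i (j+1) (by omega) hj hij h
    · rw [cadd i] at h
      exact pne j (i+1) (by omega) hi hji h
  -- identify the five vertices
  have A01 := (relabel_adj_internal G C f hf hfC τ _ _).2 (cyc_succ 0)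
  have A12 := (relabel_adj_internal G C f hf hfC τ _ _).2 (cyc_succ 1)
  have A23 := (relabel_adj_internal G C f hf hfC τ _ _).2 (cyc_succ 2)
  have A34 := (relabel_adj_internal G C f hf hfC τ _ _).2 (cyc_succ 3)
  have N13 : ¬ (relabel G C f τ).Adj (f (τ (p + ((1:ℕ) : Fin (m+6))))) (f (τ (p + ((3:ℕ) : Fin (m+6))))) :=
    fun h => cyc_non 1 3 (by omega) (by omega) (by omega) (by omega)
      ((relabel_adj_internal G C f hf hfC τ _ _).1 h)
  have N24 : ¬ (relabel G C f τ).Adj (f (τ (p + ((2:ℕ) : Fin (m+6))))) (f (τ (p + ((4:ℕ) : Fin (m+6))))) :=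
    fun h => cyc_non 2 4 (by omega) (by omega) (by omega) (by omega)
      ((relabel_adj_internal G C f hf hfC τ _ _).1 h)
  have N04 : ¬ (relabel G C f τ).Adj (f (τ (p + ((0:ℕ) : Fin (m+6))))) (f (τ (p + ((4:ℕ) : Fin (m+6))))) :=
    fun h => cyc_non 0 4 (by omega) (by omega) (by omega) (by omega)
      ((relabel_adj_internal G C f hf hfC τ _ _).1 h)
  -- the edge-set identity
  have hswap : ∀ z : Fin (m+6), f (τ z) =
      f ((τ * Equiv.swap (p + ((2:ℕ) : Fin (m+6))) (p + ((3:ℕ) : Fin (m+6))))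
        (Equiv.swap (p + ((2:ℕ) : Fin (m+6))) (p + ((3:ℕ) : Fin (m+6))) z)) := by
    intro z
    rw [Equiv.Perm.mul_apply, Equiv.swap_apply_self]
  have hEdge : (relabel G C f (τ * Equiv.swap (p + ((2:ℕ) : Fin (m+6))) (p + ((3:ℕ) : Fin (m+6))))).edgeSet =
      ((relabel G C f τ).edgeSet \
        {s(f (τ (p + ((1:ℕ) : Fin (m+6)))), f (τ (p + ((2:ℕ) : Fin (m+6))))),
         s(f (τ (p + ((3:ℕ) : Fin (m+6)))), f (τ (p + ((4:ℕ) : Fin (m+6)))))}) ∪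
      {s(f (τ (p + ((1:ℕ) : Fin (m+6)))), f (τ (p + ((3:ℕ) : Fin (m+6))))),
       s(f (τ (p + ((2:ℕ) : Fin (m+6)))), f (τ (p + ((4:ℕ) : Fin (m+6)))))} := by
    apply Set.ext
    intro q
    induction q using Sym2.ind with
    | _ u v =>
    simp only [mem_edgeSet, Set.mem_union, Set.mem_diff, Set.mem_insert_iff,
      Set.mem_singleton_iff]
    by_cases hu : u ∈ C
    · by_cases hv : v ∈ C
      · obtain ⟨i0, rfl⟩ := hsurj u hu
        obtain ⟨j0, rfl⟩ := hsurj v hv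
        obtain ⟨x, rfl⟩ : ∃ x, i0 = τ x := ⟨τ⁻¹ i0, (τ.apply_symm_apply i0).symm⟩
        obtain ⟨y, rfl⟩ : ∃ y, j0 = τ y := ⟨τ⁻¹ j0, (τ.apply_symm_apply j0).symm⟩
        have LHSiff : (relabel G C f (τ * Equiv.swap (p + ((2:ℕ) : Fin (m+6))) (p + ((3:ℕ) : Fin (m+6))))).Adj
            (f (τ x)) (f (τ y)) ↔ (cycleGraph (m+6)).Adj
              (Equiv.swap (p + ((2:ℕ) : Fin (m+6))) (p + ((3:ℕ) : Fin (m+6))) x)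
              (Equiv.swap (p + ((2:ℕ) : Fin (m+6))) (p + ((3:ℕ) : Fin (m+6))) y) := by
          rw [hswap x, hswap y]
          exact relabel_adj_internal G C f hf hfC _ _ _
        rw [LHSiff, relabel_adj_internal G C f hf hfC τ x y]
        simp only [Sym2.eq_iff, hfi]
        have hcore := core p x y
        first
          | exact hcore
          | tauto
      · rw [relabel_adj_cross G C f hfC _ (Or.inr hv), relabel_adj_cross G C f hfC _ (Or.inr hv)]
        have hvne : ∀ i : Fin (m+6), v ≠ f i := fun i h => hv (h ▸ hfC i)
        have h1 : ∀ i j : Fin (m+6),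
            ¬((u = f (τ i) ∧ v = f (τ j)) ∨ (u = f (τ j) ∧ v = f (τ i))) := by
          rintro i j (⟨_, h⟩ | ⟨_, h⟩) <;> exact hvne _ h
        simp only [Sym2.eq_iff]
        constructor
        · intro h
          exact Or.inl ⟨h, fun hc => hc.elim (h1 _ _) (h1 _ _)⟩
        · rintro (⟨h, _⟩ | hc)
          · exact h
          · exact absurd hc (fun hc => hc.elim (h1 _ _) (h1 _ _))
    · rw [relabel_adj_cross G C f hfC _ (Or.inl hu), relabel_adj_cross G C f hfC _ (Or.inl hu)]
      have hune : ∀ i : Fin (m+6), u ≠ f i := fun i h => hu (h ▸ hfC i)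
      have h1 : ∀ i j : Fin (m+6),
          ¬((u = f (τ i) ∧ v = f (τ j)) ∨ (u = f (τ j) ∧ v = f (τ i))) := by
        rintro i j (⟨h, _⟩ | ⟨h, _⟩) <;> exact hune _ h
      simp only [Sym2.eq_iff]
      constructor
      · intro h
        exact Or.inl ⟨h, fun hc => hc.elim (h1 _ _) (h1 _ _)⟩
      · rintro (⟨h, _⟩ | hc)
        · exact h
        · exact absurd hc (fun hc => hc.elim (h1 _ _) (h1 _ _))
  -- apply the two-switch lemma
  refine swap_step (relabel G C f τ) _
    (f (τ (p + ((0:ℕ) : Fin (m+6))))) (f (τ (p + ((1:ℕ) : Fin (m+6)))))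
    (f (τ (p + ((2:ℕ) : Fin (m+6))))) (f (τ (p + ((3:ℕ) : Fin (m+6)))))
    (f (τ (p + ((4:ℕ) : Fin (m+6)))))
    (fne 0 1 (by omega) (by omega) (by omega)) (fne 0 2 (by omega) (by omega) (by omega))
    (fne 0 3 (by omega) (by omega) (by omega)) (fne 0 4 (by omega) (by omega) (by omega))
    (fne 1 2 (by omega) (by omega) (by omega)) (fne 1 3 (by omega) (by omega) (by omega))
    (fne 1 4 (by omega) (by omega) (by omega)) (fne 2 3 (by omega) (by omega) (by omega))
    (fne 2 4 (by omega) (by omega) (by omega)) (fne 3 4 (by omega) (by omega) (by omega))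
    A01 A12 A23 A34 N13 N24 N04 hEdge

include hf hfC hsurj hGadj in
lemma relabel_all (τ g : Equiv.Perm (Fin (m+6))) :
    DeltaEquiv (relabel G C f τ) (relabel G C f (τ * g)) := by
  have c23 : ((3:ℕ) : Fin (m+6)) = ((2:ℕ) : Fin (m+6)) + 1 := by push_cast; ring
  suffices H : ∀ g' ∈ Submonoid.closure
      (Set.range fun i : Fin (m+5) => Equiv.swap i.castSucc i.succ),
      ∀ τ' : Equiv.Perm (Fin (m+6)), DeltaEquiv (relabel G C f τ') (relabel G C f (τ' * g')) by
    refine H g ?_ τ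
    rw [Equiv.Perm.mclosure_swap_castSucc_succ]
    trivial
  intro g' hg'
  induction hg' using Submonoid.closure_induction with
  | mem z hz =>
    obtain ⟨i, rfl⟩ := hz
    intro τ'
    have e2 : (i.castSucc : Fin (m+6)) =
        (i.castSucc - ((2:ℕ) : Fin (m+6))) + ((2:ℕ) : Fin (m+6)) := by ring
    have e3 : (i.succ : Fin (m+6)) =
        (i.castSucc - ((2:ℕ) : Fin (m+6))) + ((3:ℕ) : Fin (m+6)) := by
      rw [← Fin.coeSucc_eq_succ, c23]; ring
    have step := relabel_step G C f hf hfC hsurj τ' (i.castSucc - ((2:ℕ) : Fin (m+6)))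
    rw [← e2, ← e3] at step
    exact step
  | one =>
    intro τ'
    rw [mul_one]
    exact Relation.ReflTransGen.refl
  | mul z w hz hw ihz ihw =>
    intro τ'
    have h1 := ihz τ'
    have h2 := ihw (τ' * z)
    rw [mul_assoc] at h2
    exact h1.trans h2

end Relabel

/-- If a set `C` of `k ≥ 6` vertices induces a `k`-cycle in a `d`-regular graph
`G`, then for any permutation `σ` of the vertices fixing everything outside `C`,
the graph obtained by relabelling the edges inside `C` by `σ` is Δ-switch
equivalent to `G`. -/
theorem permute_induced_cycle {V : Type*} [Fintype V] {d k : ℕ}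
    (G : SimpleGraph V) (hreg : RegularDeg G d)
    (C : Set V) (hk : 6 ≤ k) (hcard : C.ncard = k)
    (hcycle : Nonempty ((G.induce C) ≃g SimpleGraph.cycleGraph k))
    (σ : Equiv.Perm V) (hfix : ∀ x ∉ C, σ x = x)
    (Gσ : SimpleGraph V)
    (hGσ : ∀ a b : V, Gσ.Adj a b ↔
      ((G.Adj a b ∧ (a ∉ C ∨ b ∉ C)) ∨
        (∃ u w : V, u ∈ C ∧ w ∈ C ∧ G.Adj u w ∧ a = σ u ∧ b = σ w))) :
    DeltaEquiv G Gσ := by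
  obtain ⟨m, rfl⟩ : ∃ m, k = m + 6 := ⟨k - 6, by omega⟩
  obtain ⟨e⟩ := hcycle
  set f : Fin (m+6) → V := fun i => ((e.symm i : C) : V) with hfdef
  have hf : Function.Injective f := fun i j h =>
    e.symm.toEquiv.injective (Subtype.coe_injective h)
  have hfC : ∀ i, f i ∈ C := fun i => (e.symm i).2
  have hsurj : ∀ x ∈ C, ∃ i, f i = x := by
    intro x hx
    refine ⟨e ⟨x, hx⟩, ?_⟩
    rw [hfdef]
    simp
  have hGadj : ∀ i j, G.Adj (f i) (f j) ↔ (cycleGraph (m+6)).Adj i j := fun i j =>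
    e.symm.map_adj_iff
  have hσC : ∀ x ∈ C, σ x ∈ C := by
    intro x hx
    by_contra hout
    have h1 : σ (σ x) = σ x := hfix (σ x) hout
    have h2 : σ x = x := σ.injective h1
    rw [h2] at hout
    exact hout hx
  set g0 : Fin (m+6) → Fin (m+6) := fun i => e ⟨σ (f i), hσC _ (hfC i)⟩ with hg0
  have hgf0 : ∀ i, f (g0 i) = σ (f i) := by
    intro i
    show ((e.symm (e ⟨σ (f i), hσC _ (hfC i)⟩) : C) : V) = σ (f i)
    rw [RelIso.symm_apply_apply]
  have hg0inj : Function.Injective g0 := by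
    intro i j h
    have : σ (f i) = σ (f j) := by rw [← hgf0, ← hgf0, h]
    exact hf (σ.injective this)
  have hg0bij : Function.Bijective g0 := Finite.injective_iff_bijective.mp hg0inj
  set g : Equiv.Perm (Fin (m+6)) := Equiv.ofBijective g0 hg0bij with hgdef
  have hgf : ∀ i, f (g i) = σ (f i) := hgf0
  have hGσeq : Gσ = relabel G C f (1 * g) := by
    rw [one_mul]
    ext a b
    rw [hGσ a b, relabel_adj]
    constructor
    · rintro (⟨h, hc⟩ | ⟨u, w, huC, hwC, huw, rfl, rfl⟩)
      · exact Or.inl ⟨h, hc⟩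
      · right
        obtain ⟨i, rfl⟩ := hsurj u huC
        obtain ⟨j, rfl⟩ := hsurj w hwC
        refine ⟨fun hh => huw.ne (σ.injective hh), i, j, (hGadj i j).1 huw,
          (hgf i).symm, (hgf j).symm⟩
    · rintro (⟨h, hc⟩ | ⟨hne, i, j, hadj, rfl, rfl⟩)
      · exact Or.inl ⟨h, hc⟩
      · right
        exact ⟨f i, f j, hfC i, hfC j, (hGadj i j).2 hadj, hgf i, hgf j⟩
  have hGeq : G = relabel G C f 1 := (relabel_one G C f hf hfC hsurj hGadj).symm
  rw [hGeq, hGσeq]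
  exact relabel_all G C f hf hfC hsurj hGadj 1 g
end
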